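/- For λ, γ > 0 and m(λ; γ) = −(1/(2γλ))[1 − γ + λ − √((1+γ+λ)² − 4γ)], one has 0 < λ·m(λ; γ) < 1. -/
import Mathlib


noncomputable def mMP (l g : ℝ) : ℝ :=
  -(1 / (2 * g * l)) * (1 - g + l - Real.sqrt ((1 + g + l) ^ 2 - 4 * g))

theorem lambda_mMP_in_unit_interval (l g : ℝ) (hl : 0 < l) (hg : 0 < g) :
    0 < l * mMP l g ∧ l * mMP l g < 1 := by
  set s := Real.sqrt ((1 + g + l) ^ 2 - 4 * g) with hs
  have hnn : 0 ≤ (1 + g + l) ^ 2 - 4 * g := by nlinarith [sq_nonneg (1 - g + l), mul_pos hg hl]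
  have hsq : s ^ 2 = (1 + g + l) ^ 2 - 4 * g := Real.sq_sqrt hnn
  have hs0 : 0 ≤ s := Real.sqrt_nonneg _
  have h1 : 1 - g + l < s := by nlinarith [sq_nonneg (1 - g + l), mul_pos hg hl]
  have h2 : s < 1 + g + l := by nlinarith [sq_nonneg (1 - g + l), mul_pos hg hl]
  have heq : l * mMP l g = (s - (1 - g + l)) / (2 * g) := by
    unfold mMP
    rw [← hs]
    field_simp
    ring
  rw [heq]
  constructor
  · exact div_pos (by linarith) (by positivity)
  · rw [div_lt_one (by positivity)]
    linarith
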